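/- arXiv:math/0611492 — 4 statements merged into one kernel-verified Lean document; each statement's English description precedes it below -/
import Mathlib

section
/- Let G act 2-transitively on a finite set X with |X| = n ≥ 2, and let H be a regular normal subgroup of G. Then all non-identity elements of H are conjugate in G. -/
/-! Fix a point `x`. Regularity makes `h ↦ h • x` injective on `H`, so a non-identity `h ∈ H` moves `x`.
Given non-identity `h₁, h₂ ∈ H`, double transitivity yields `g` fixing `x` with `g • h₁ • x = h₂ • x`;
then `g h₁ g⁻¹ ∈ H` (normality) and `h₂` both send `x` to `h₂ • x`, hence are equal. -/

section RegularSubgroup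

variable {G X : Type*} [Group G] [MulAction G X] {H : Subgroup G} {x : X}

lemma eq_of_mem_of_smul_eq (hreg : ∀ y : X, ∃! h : H, (h : G) • x = y) {a b : G}
    (ha : a ∈ H) (hb : b ∈ H) (hab : a • x = b • x) : a = b :=
  congrArg Subtype.val <| (hreg (b • x)).unique (y₁ := ⟨a, ha⟩) (y₂ := ⟨b, hb⟩) hab rfl

lemma ne_smul_of_mem_of_ne_one (hreg : ∀ y : X, ∃! h : H, (h : G) • x = y) {a : G}
    (ha : a ∈ H) (ha1 : a ≠ 1) : x ≠ a • x := fun hx =>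
  ha1 <| eq_of_mem_of_smul_eq hreg ha H.one_mem (by rw [one_smul, ← hx])

end RegularSubgroup

lemma conj_smul_of_smul_eq_self {G X : Type*} [Group G] [MulAction G X] {g : G} {x : X}
    (hgx : g • x = x) (a : G) : (g * a * g⁻¹) • x = g • a • x := by
  rw [mul_smul, mul_smul, inv_smul_eq_iff.mpr hgx.symm]

theorem regular_normal_subgroup_nonid_conjugate_general
    {G : Type*} [Group G] {X : Type*}
    [MulAction G X] {n : ℕ} (hn : 2 ≤ n) (hcard : Nat.card X = n)
    (h2t : ∀ a b c d : X, a ≠ b → c ≠ d → ∃ g : G, g • a = c ∧ g • b = d)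
    (H : Subgroup G) (hnorm : H.Normal)
    (hreg : ∀ x y : X, ∃! h : H, (h : G) • x = y) :
    ∀ h₁ h₂ : G, h₁ ∈ H → h₂ ∈ H → h₁ ≠ 1 → h₂ ≠ 1 →
      ∃ g : G, g * h₁ * g⁻¹ = h₂ := by
  intro h₁ h₂ hh₁ hh₂ hne₁ hne₂
  obtain ⟨x⟩ : Nonempty X := (Nat.card_ne_zero.mp (by omega)).1
  obtain ⟨g, hgx, hgh⟩ := h2t x (h₁ • x) x (h₂ • x)
    (ne_smul_of_mem_of_ne_one (hreg x) hh₁ hne₁) (ne_smul_of_mem_of_ne_one (hreg x) hh₂ hne₂)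
  refine ⟨g, eq_of_mem_of_smul_eq (hreg x) (hnorm.conj_mem h₁ hh₁ g) hh₂ ?_⟩
  rw [conj_smul_of_smul_eq_self hgx, hgh]

theorem regular_normal_subgroup_nonid_conjugate
    {G : Type*} [Group G] [Finite G] {X : Type*} [Finite X]
    [MulAction G X] {n : ℕ} (hn : 2 ≤ n) (hcard : Nat.card X = n)
    (h2t : ∀ a b c d : X, a ≠ b → c ≠ d → ∃ g : G, g • a = c ∧ g • b = d)
    (H : Subgroup G) (hnorm : H.Normal)
    (hreg : ∀ x y : X, ∃! h : H, (h : G) • x = y) :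
    ∀ h₁ h₂ : G, h₁ ∈ H → h₂ ∈ H → h₁ ≠ 1 → h₂ ≠ 1 →
      ∃ g : G, g * h₁ * g⁻¹ = h₂ :=
  regular_normal_subgroup_nonid_conjugate_general hn hcard h2t H hnorm hreg
end

section
/- Let G act sharply 2-transitively on a finite set X with |X| = n ≥ 2. Then the set N consisting of the identity and all fixed-point-free elements of G acts transitively on X and has exactly n elements. -/
/-!
Fix `x ≠ y` and let `S` be the set of `g` with `g • x = y`. Sharp 2-transitivity makes `g ↦ g • x'`
(for any `x' ≠ x`) a bijection from `S` onto `X \ {y}`, so `|S| = n - 1`. The elements of `S` with a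
fixed point `z` correspond bijectively to the points `z ∉ {x, y}`, because a non-identity element
fixes at most one point; there are `n - 2` of them. Hence exactly one element of `S` is
fixed-point-free, so `g ↦ g • x` is a bijection from `N` onto `X`.
-/

def SharplyTwoTransitive (G X : Type*) [SMul G X] : Prop :=
  ∀ a b c d : X, a ≠ b → c ≠ d → ∃! g : G, g • a = c ∧ g • b = d

namespace SharplyTwoTransitive

variable {G X : Type*} [Group G] [MulAction G X] (hS : SharplyTwoTransitive G X)
include hS

theorem eq_of_smul_eq_of_smul_eq {a b : X} (hab : a ≠ b) {g h : G}
    (ha : g • a = h • a) (hb : g • b = h • b) : g = h := by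
  have hgab : g • a ≠ g • b := (MulAction.injective g).ne hab
  exact (hS a b _ _ hab hgab).unique ⟨rfl, rfl⟩ ⟨ha.symm, hb.symm⟩

theorem eq_of_smul_eq_self_of_ne_one {g : G} (hg : g ≠ 1) {a b : X}
    (ha : g • a = a) (hb : g • b = b) : a = b := by
  by_contra hab
  exact hg (hS.eq_of_smul_eq_of_smul_eq hab (by rwa [one_smul]) (by rwa [one_smul]))

theorem ncard_smul_eq [Finite X] [Nontrivial X] (x y : X) :
    {g : G | g • x = y}.ncard = Nat.card X - 1 := by
  obtain ⟨x', hx'⟩ := exists_ne x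
  calc {g : G | g • x = y}.ncard = ({y}ᶜ : Set X).ncard := by
        refine Set.ncard_congr (fun g _ => g • x') (fun g hg => ?_) (fun g h hg hh hgh => ?_)
          (fun z hz => ?_)
        · exact fun hgy => hx' (MulAction.injective g (hgy.trans hg.symm))
        · exact hS.eq_of_smul_eq_of_smul_eq hx'.symm (hg.trans hh.symm) hgh
        · obtain ⟨g, ⟨hgx, hgx'⟩, -⟩ := hS x x' y z hx'.symm (Ne.symm hz)
          exact ⟨g, hgx, hgx'⟩
    _ = Nat.card X - 1 := by rw [Set.ncard_compl, Set.ncard_singleton]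

theorem ncard_smul_eq_of_exists_fixed [Finite X] {x y : X} (hxy : x ≠ y) :
    {g : G | g • x = y ∧ ∃ z : X, g • z = z}.ncard = Nat.card X - 2 := by
  have hg_ne_one {g : G} (hgx : g • x = y) : g ≠ 1 := by
    rintro rfl
    exact hxy ((one_smul G x).symm.trans hgx)
  calc {g : G | g • x = y ∧ ∃ z : X, g • z = z}.ncard = ({x, y}ᶜ : Set X).ncard := by
        refine Set.ncard_congr (fun g hg => hg.2.choose) (fun g hg => ?_) (fun g h hg hh hgh => ?_)
          (fun z hz => ?_)
        · have hz := hg.2.choose_spec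
          simp only [Set.mem_compl_iff, Set.mem_insert_iff, Set.mem_singleton_iff, not_or]
          refine ⟨fun hzx => hxy ?_, fun hzy => hxy (MulAction.injective g ?_)⟩
          · rw [← hg.1, ← hzx, hz]
          · change g • x = g • y
            rw [hg.1, ← hzy, hz]
        · have hgz := hg.2.choose_spec
          have hhz := hh.2.choose_spec
          rw [← hgh] at hhz
          refine hS.eq_of_smul_eq_of_smul_eq (a := x) (fun hzx => hxy ?_) (hg.1.trans hh.1.symm)
            (hgz.trans hhz.symm)
          rw [← hg.1, hzx, hgz]
        · simp only [Set.mem_compl_iff, Set.mem_insert_iff, Set.mem_singleton_iff, not_or] at hz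
          obtain ⟨g, ⟨hgx, hgz⟩, -⟩ := hS x z y z (Ne.symm hz.1) (Ne.symm hz.2)
          have hg : g • x = y ∧ ∃ z : X, g • z = z := ⟨hgx, z, hgz⟩
          exact ⟨g, hg, hS.eq_of_smul_eq_self_of_ne_one (hg_ne_one hgx) hg.2.choose_spec hgz⟩
    _ = Nat.card X - 2 := by rw [Set.ncard_compl, Set.ncard_pair hxy]

theorem existsUnique_fixedPointFree_smul_eq [Finite X] {x y : X} (hxy : x ≠ y) :
    ∃! g : G, (∀ z : X, g • z ≠ z) ∧ g • x = y := by
  have : Nontrivial X := nontrivial_of_ne x y hxy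
  have hn : 2 ≤ Nat.card X := Finite.one_lt_card_iff_nontrivial.mpr this
  set S := {g : G | g • x = y}
  set T := {g : G | g • x = y ∧ ∃ z : X, g • z = z}
  have hS_card : S.ncard = Nat.card X - 1 := hS.ncard_smul_eq x y
  have hTS : T ⊆ S := fun g hg => hg.1
  have hSfin : S.Finite := Set.finite_of_ncard_ne_zero (by omega)
  have hdiff : (S \ T).ncard = 1 := by
    rw [Set.ncard_sdiff hTS (hSfin.subset hTS), hS_card, hS.ncard_smul_eq_of_exists_fixed hxy]
    omega
  obtain ⟨g, hg⟩ := Set.ncard_eq_one.mp hdiff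
  have hmem (h : G) : h ∈ S \ T ↔ (∀ z : X, h • z ≠ z) ∧ h • x = y := by
    simp only [S, T, Set.mem_sdiff, Set.mem_ofPred_eq, not_and, not_exists]
    exact ⟨fun h' => ⟨h'.2 h'.1, h'.1⟩, fun h' => ⟨h'.2, fun _ => h'.1⟩⟩
  refine ⟨g, (hmem g).mp (hg ▸ Set.mem_singleton g), fun h hh => ?_⟩
  simpa [hg] using (hmem h).mpr hh

theorem bijective_smul_of_eq_one_or_fixedPointFree [Finite X] (x : X) :
    Function.Bijective (fun g : {g : G | g = 1 ∨ ∀ z : X, g • z ≠ z} => (g : G) • x) := by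
  rw [Function.bijective_iff_existsUnique]
  intro y
  rcases eq_or_ne x y with rfl | hxy
  · refine ⟨⟨1, Or.inl rfl⟩, one_smul G x, fun ⟨g, hg⟩ hgx => Subtype.ext ?_⟩
    exact hg.resolve_right fun hfree => hfree x hgx
  · obtain ⟨g, ⟨hfree, hgx⟩, huniq⟩ := hS.existsUnique_fixedPointFree_smul_eq hxy
    refine ⟨⟨g, Or.inr hfree⟩, hgx, fun ⟨h, hh⟩ hhx => Subtype.ext ?_⟩
    rcases hh with rfl | hhfree
    · exact absurd ((one_smul G x).symm.trans hhx) hxy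
    · exact huniq h ⟨hhfree, hhx⟩

end SharplyTwoTransitive

theorem sharply_two_transitive_fpf_set
    {G : Type*} [Group G] {X : Type*} [Finite X] [MulAction G X] {n : ℕ}
    (hcard : Nat.card X = n) (hn : 2 ≤ n)
    (hS : ∀ a b c d : X, a ≠ b → c ≠ d →
      ∃! g : G, g • a = c ∧ g • b = d) :
    (∀ x y : X, ∃ g ∈ {g : G | g = 1 ∨ ∀ x : X, g • x ≠ x}, g • x = y) ∧
    Nat.card {g : G | g = 1 ∨ ∀ x : X, g • x ≠ x} = n := by
  have hS : SharplyTwoTransitive G X := hS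
  refine ⟨fun x y => ?_, ?_⟩
  · obtain ⟨g, rfl⟩ := (hS.bijective_smul_of_eq_one_or_fixedPointFree x).2 y
    exact ⟨g, g.2, rfl⟩
  · obtain ⟨⟨x⟩, -⟩ := Nat.card_pos_iff.mp (show 0 < Nat.card X by omega)
    rw [← hcard]
    exact Nat.card_eq_of_bijective _ (hS.bijective_smul_of_eq_one_or_fixedPointFree x)
end

section
/- There exists a complete set of n-1 mutually orthogonal Latin squares of order n if and only if there exists a projective plane of order n (i.e., a 2-(n²+n+1, n+1, 1) design). -/
section MOLSPlane
variable {n : ℕ}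



lemma fiber_card (hn : 2 ≤ n) (f : Fin (n+1) → Fin n × Fin n → Fin n)
    (hf : ∀ c c' : Fin (n+1), c ≠ c' → Function.Injective (fun p => (f c p, f c' p)))
    (c : Fin (n+1)) (t : Fin n) :
    (Finset.univ.filter (fun p => f c p = t)).card = n := by
  obtain ⟨c', hc'⟩ : ∃ c' : Fin (n+1), c' ≠ c := by
    rcases eq_or_ne c 0 with rfl | h
    · exact ⟨1, by simp [Fin.ext_iff]; omega⟩
    · exact ⟨0, fun h' => h h'.symm⟩
  have hbij : Function.Bijective (fun p => (f c p, f c' p)) :=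
    Finite.injective_iff_bijective.mp (hf c c' (fun h => hc' h.symm))
  have key : (Finset.univ.filter (fun p => f c p = t)).card
      = (Finset.univ : Finset (Fin n)).card := by
    apply Finset.card_bij (fun p _ => f c' p)
    · intro a _; exact Finset.mem_univ _
    · intro a ha b hb hab
      simp only [Finset.mem_filter] at ha hb
      exact hbij.1 (by simp [ha.2, hb.2, hab] : (f c a, f c' a) = (f c b, f c' b))
    · intro u _
      obtain ⟨p, hp⟩ := hbij.2 (t, u)
      simp only [Prod.ext_iff] at hp
      exact ⟨p, by simp [hp.1], hp.2⟩
  simpa using key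

lemma unique_class (hn : 2 ≤ n) (f : Fin (n+1) → Fin n × Fin n → Fin n)
    (hf : ∀ c c' : Fin (n+1), c ≠ c' → Function.Injective (fun p => (f c p, f c' p)))
    (x y : Fin n × Fin n) (hxy : x ≠ y) : ∃! c, f c x = f c y := by
  have huniq : ∀ c c' : Fin (n+1), f c x = f c y → f c' x = f c' y → c = c' := by
    intro c c' h h'
    by_contra hne
    exact hxy (hf c c' hne (by simp [h, h']))
  rcases eq_or_ne (f 0 x) (f 0 y) with h0 | h0
  · exact ⟨0, h0, fun c hc => huniq c 0 hc h0⟩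
  · have hbij : ∀ c : Fin (n+1), c ≠ 0 → Function.Bijective (fun p => (f 0 p, f c p)) :=
      fun c hc => Finite.injective_iff_bijective.mp (hf 0 c (fun h => hc h.symm))
    have hz : ∀ c : Fin (n+1), c ≠ 0 → ∃ z, f 0 z = f 0 y ∧ f c z = f c x := by
      intro c hc
      obtain ⟨z, hz⟩ := (hbij c hc).2 (f 0 y, f c x)
      exact ⟨z, by simpa [Prod.ext_iff] using hz⟩
    choose z hz1 hz2 using hz
    have hmemT : ∀ c : Fin (n+1), c ∈ Finset.univ.filter (fun c => c ≠ 0) → c ≠ 0 :=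
      fun c hc => by simpa using hc
    have hcardS : (Finset.univ.filter (fun p => f 0 p = f 0 y)).card = n :=
      fiber_card hn f hf 0 (f 0 y)
    have hcardT : (Finset.univ.filter (fun c : Fin (n+1) => c ≠ 0)).card = n := by
      have : Finset.univ.filter (fun c : Fin (n+1) => c ≠ 0) = Finset.univ.erase 0 := by
        ext c; simp [Finset.mem_erase]
      rw [this, Finset.card_erase_of_mem (Finset.mem_univ _)]
      simp
    have hsurj := Finset.surj_on_of_inj_on_of_card_le
      (fun (c : Fin (n+1)) hc => z c (hmemT c hc))
      (fun c hc => by simp [hz1])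
      (fun c c' hc hc' heq => by
        by_contra hne
        have hzx : z c (hmemT c hc) = x := by
          apply hf c c' hne
          show (f c _, f c' _) = (f c x, f c' x)
          rw [hz2 c (hmemT c hc)]
          rw [show z c (hmemT c hc) = z c' (hmemT c' hc') from heq]
          rw [hz2 c' (hmemT c' hc')]
        exact h0 (by rw [← hz1 c (hmemT c hc), hzx]))
      (le_of_eq (hcardS.trans hcardT.symm))
    obtain ⟨c, hc, hyc⟩ := hsurj y (by simp)
    have hcx : f c x = f c y := by
      rw [← hz2 c (hmemT c hc)]
      exact congrArg (f c) hyc.symm ▸ rfl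
    exact ⟨c, hcx, fun c' hc' => huniq c' c hc' hcx⟩



lemma dir1 (hn : 2 ≤ n) (f : Fin (n+1) → Fin n × Fin n → Fin n)
    (hf : ∀ c c' : Fin (n+1), c ≠ c' → Function.Injective (fun p => (f c p, f c' p))) :
    (∃ L : Finset (Finset (Fin (n ^ 2 + n + 1))),
      (∀ l ∈ L, l.card = n + 1) ∧
      (∀ p q : Fin (n ^ 2 + n + 1), p ≠ q →
        ∃! l : Finset (Fin (n ^ 2 + n + 1)), l ∈ L ∧ p ∈ l ∧ q ∈ l)) := by
  have e : (Fin n × Fin n) ⊕ Fin (n+1) ≃ Fin (n ^ 2 + n + 1) :=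
    (Equiv.sumCongr finProdFinEquiv (Equiv.refl _)).trans
      (finSumFinEquiv.trans (finCongr (by ring)))
  set line : Fin (n+1) → Fin n → Finset (Fin (n ^ 2 + n + 1)) :=
    fun c t => ((Finset.univ.filter (fun x => f c x = t)).image (fun x => e (Sum.inl x)))
      ∪ {e (Sum.inr c)} with hline
  set linf : Finset (Fin (n ^ 2 + n + 1)) :=
    Finset.univ.image (fun c => e (Sum.inr c)) with hlinf
  have hmem_line : ∀ (c t) (s : (Fin n × Fin n) ⊕ Fin (n+1)),
      e s ∈ line c t ↔ (∃ x, f c x = t ∧ Sum.inl x = s) ∨ s = Sum.inr c := by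
    intro c t s
    simp only [hline, Finset.mem_union, Finset.mem_image, Finset.mem_filter,
      Finset.mem_univ, true_and, Finset.mem_singleton, EmbeddingLike.apply_eq_iff_eq]
  have hmem_linf : ∀ (s : (Fin n × Fin n) ⊕ Fin (n+1)),
      e s ∈ linf ↔ ∃ c, Sum.inr c = s := by
    intro s
    simp only [hlinf, Finset.mem_image, Finset.mem_univ, true_and,
      EmbeddingLike.apply_eq_iff_eq]
  refine ⟨(Finset.univ.image (fun ct : Fin (n+1) × Fin n => line ct.1 ct.2)) ∪ {linf},
    ?_, ?_⟩
  · intro l hl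
    simp only [Finset.mem_union, Finset.mem_image, Finset.mem_univ, true_and,
      Finset.mem_singleton] at hl
    rcases hl with ⟨⟨c, t⟩, rfl⟩ | rfl
    · -- card of class line
      rw [hline]
      rw [Finset.card_union_of_disjoint]
      · rw [Finset.card_image_of_injective _ (fun a b hab => Sum.inl.inj (e.injective hab)),
          Finset.card_singleton, fiber_card hn f hf c t]
      · simp only [Finset.disjoint_singleton_right, Finset.mem_image]
        rintro ⟨x, -, hx⟩
        exact (Sum.inl_ne_inr (e.injective hx)).elim
    · rw [hlinf, Finset.card_image_of_injective _
        (fun a b hab => Sum.inr.inj (e.injective hab))]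
      simp
  · intro p q hpq
    obtain ⟨s, rfl⟩ := e.surjective p
    obtain ⟨s', rfl⟩ := e.surjective q
    have hss' : s ≠ s' := fun h => hpq (congrArg e h)
    have hmemL : ∀ l, l ∈ (Finset.univ.image
        (fun ct : Fin (n+1) × Fin n => line ct.1 ct.2)) ∪ {linf} ↔
        (∃ c t, l = line c t) ∨ l = linf := by
      intro l
      simp only [Finset.mem_union, Finset.mem_image, Finset.mem_univ, true_and,
        Finset.mem_singleton, Prod.exists]
      constructor
      · rintro (⟨c, t, rfl⟩ | rfl)
        · exact Or.inl ⟨c, t, rfl⟩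
        · exact Or.inr rfl
      · rintro (⟨c, t, rfl⟩ | rfl)
        · exact Or.inl ⟨c, t, rfl⟩
        · exact Or.inr rfl
    match s, s' with
    | Sum.inl x, Sum.inl y =>
      have hxy : x ≠ y := fun h => hss' (congrArg Sum.inl h)
      obtain ⟨c₀, hc₀, hc₀u⟩ := unique_class hn f hf x y hxy
      refine ⟨line c₀ (f c₀ x), ⟨(hmemL _).mpr (Or.inl ⟨c₀, _, rfl⟩),
        (hmem_line _ _ _).mpr (Or.inl ⟨x, rfl, rfl⟩),
        (hmem_line _ _ _).mpr (Or.inl ⟨y, hc₀.symm, rfl⟩)⟩, ?_⟩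
      rintro l ⟨hl, hpl, hql⟩
      rcases (hmemL l).mp hl with ⟨c, t, rfl⟩ | rfl
      · rcases (hmem_line c t _).mp hpl with ⟨x', hx', hxx'⟩ | h
        · rcases (hmem_line c t _).mp hql with ⟨y', hy', hyy'⟩ | h
          · cases Sum.inl.inj hxx'
            cases Sum.inl.inj hyy'
            have hceq : c = c₀ := hc₀u c (hx'.trans hy'.symm)
            subst hceq
            rw [hx']
          · exact (Sum.inl_ne_inr h).elim
        · exact (Sum.inl_ne_inr h).elim
      · obtain ⟨c, hc⟩ := (hmem_linf _).mp hpl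
        exact (Sum.inl_ne_inr hc.symm).elim
    | Sum.inl x, Sum.inr c =>
      refine ⟨line c (f c x), ⟨(hmemL _).mpr (Or.inl ⟨c, _, rfl⟩),
        (hmem_line _ _ _).mpr (Or.inl ⟨x, rfl, rfl⟩),
        (hmem_line _ _ _).mpr (Or.inr rfl)⟩, ?_⟩
      rintro l ⟨hl, hpl, hql⟩
      rcases (hmemL l).mp hl with ⟨c', t', rfl⟩ | rfl
      · rcases (hmem_line c' t' _).mp hpl with ⟨x', hx', hxx'⟩ | h
        · cases Sum.inl.inj hxx'
          rcases (hmem_line c' t' _).mp hql with ⟨y', _, hyy'⟩ | h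
          · exact (Sum.inl_ne_inr hyy').elim
          · cases Sum.inr.inj h
            rw [hx']
        · exact (Sum.inl_ne_inr h).elim
      · obtain ⟨c', hc'⟩ := (hmem_linf _).mp hpl
        exact (Sum.inl_ne_inr hc'.symm).elim
    | Sum.inr c, Sum.inl x =>
      refine ⟨line c (f c x), ⟨(hmemL _).mpr (Or.inl ⟨c, _, rfl⟩),
        (hmem_line _ _ _).mpr (Or.inr rfl),
        (hmem_line _ _ _).mpr (Or.inl ⟨x, rfl, rfl⟩)⟩, ?_⟩
      rintro l ⟨hl, hpl, hql⟩
      rcases (hmemL l).mp hl with ⟨c', t', rfl⟩ | rfl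
      · rcases (hmem_line c' t' _).mp hql with ⟨x', hx', hxx'⟩ | h
        · cases Sum.inl.inj hxx'
          rcases (hmem_line c' t' _).mp hpl with ⟨y', _, hyy'⟩ | h
          · exact (Sum.inl_ne_inr hyy').elim
          · cases Sum.inr.inj h
            rw [hx']
        · exact (Sum.inl_ne_inr h).elim
      · obtain ⟨c', hc'⟩ := (hmem_linf _).mp hql
        exact (Sum.inl_ne_inr hc'.symm).elim
    | Sum.inr c, Sum.inr c' =>
      have hcc' : c ≠ c' := fun h => hss' (congrArg Sum.inr h)
      refine ⟨linf, ⟨(hmemL _).mpr (Or.inr rfl),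
        (hmem_linf _).mpr ⟨c, rfl⟩, (hmem_linf _).mpr ⟨c', rfl⟩⟩, ?_⟩
      rintro l ⟨hl, hpl, hql⟩
      rcases (hmemL l).mp hl with ⟨c'', t'', rfl⟩ | rfl
      · rcases (hmem_line c'' t'' _).mp hpl with ⟨x', _, hx'⟩ | h
        · exact (Sum.inl_ne_inr hx').elim
        · cases Sum.inr.inj h
          rcases (hmem_line _ _ _).mp hql with ⟨y', _, hy'⟩ | h'
          · exact (Sum.inl_ne_inr hy').elim
          · exact (hcc' (Sum.inr.inj h').symm).elim
      · rfl


lemma build_f (hn : 2 ≤ n) (M : Fin (n - 1) → Fin n → Fin n → Fin n)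
    (hLatin : ∀ k : Fin (n - 1),
        (∀ i, Function.Bijective (M k i)) ∧
        (∀ j, Function.Bijective (fun i => M k i j)))
    (hOrth : ∀ k l : Fin (n - 1), k ≠ l →
        Function.Injective (fun p : Fin n × Fin n => (M k p.1 p.2, M l p.1 p.2))) :
    ∃ f : Fin (n+1) → Fin n × Fin n → Fin n,
      ∀ c c' : Fin (n+1), c ≠ c' → Function.Injective (fun p => (f c p, f c' p)) := by
  set f : Fin (n+1) → Fin n × Fin n → Fin n := fun c p =>
    if c.val = 0 then p.1
    else if c.val = 1 then p.2
    else M ⟨c.val - 2, by have := c.isLt; omega⟩ p.1 p.2 with hfdef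
  have hf0 : ∀ (c : Fin (n+1)) (_ : c.val = 0) (p : Fin n × Fin n), f c p = p.1 := by
    intro c hc p; simp only [hfdef]; rw [if_pos hc]
  have hf1 : ∀ (c : Fin (n+1)) (_ : c.val = 1) (p : Fin n × Fin n), f c p = p.2 := by
    intro c hc p; simp only [hfdef]; rw [if_neg (by omega), if_pos hc]
  have hf2 : ∀ (c : Fin (n+1)) (hc : 2 ≤ c.val) (p : Fin n × Fin n),
      f c p = M ⟨c.val - 2, by have := c.isLt; omega⟩ p.1 p.2 := by
    intro c hc p
    have h0 : ¬ c.val = 0 := by omega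
    have h1 : ¬ c.val = 1 := by omega
    simp only [hfdef]; rw [if_neg h0, if_neg h1]
  have swap : ∀ (a b : Fin n × Fin n → Fin n),
      Function.Injective (fun p => (a p, b p)) →
      Function.Injective (fun p => (b p, a p)) := by
    intro a b h p q hpq
    apply h
    simp only [Prod.ext_iff] at hpq ⊢
    exact ⟨hpq.2, hpq.1⟩
  have main : ∀ c c' : Fin (n+1), c.val < c'.val →
      Function.Injective (fun p => (f c p, f c' p)) := by
    intro c c' hlt p q h
    simp only [Prod.ext_iff] at h
    obtain ⟨h1, h2⟩ := h
    by_cases hc'2 : 2 ≤ c'.val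
    · rw [hf2 c' hc'2 p, hf2 c' hc'2 q] at h2
      by_cases hc2 : 2 ≤ c.val
      · rw [hf2 c hc2 p, hf2 c hc2 q] at h1
        have hkl : (⟨c.val - 2, by have := c.isLt; omega⟩ : Fin (n-1)) ≠
            ⟨c'.val - 2, by have := c'.isLt; omega⟩ := by
          simp only [ne_eq, Fin.mk.injEq]
          omega
        exact hOrth _ _ hkl (by simp only [Prod.ext_iff]; exact ⟨h1, h2⟩)
      · set l : Fin (n-1) := ⟨c'.val - 2, by have := c'.isLt; omega⟩ with hl
        rcases (by omega : c.val = 0 ∨ c.val = 1) with hc | hc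
        · rw [hf0 c hc p, hf0 c hc q] at h1
          rw [← h1] at h2
          have := ((hLatin l).1 p.1).1 h2
          exact Prod.ext h1 this
        · rw [hf1 c hc p, hf1 c hc q] at h1
          rw [← h1] at h2
          have := ((hLatin l).2 p.2).1
            (show (fun i => M l i p.2) p.1 = (fun i => M l i p.2) q.1 from h2)
          exact Prod.ext this h1
    · have hc0 : c.val = 0 := by omega
      have hc'1 : c'.val = 1 := by omega
      rw [hf0 c hc0 p, hf0 c hc0 q] at h1
      rw [hf1 c' hc'1 p, hf1 c' hc'1 q] at h2
      exact Prod.ext h1 h2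
  refine ⟨f, fun c c' hne => ?_⟩
  rcases lt_trichotomy c.val c'.val with h | h | h
  · exact main c c' h
  · exact (hne (Fin.ext h)).elim
  · exact swap _ _ (main c' c h)


lemma dir2 {n : ℕ} (hn : 2 ≤ n) (L : Finset (Finset (Fin (n ^ 2 + n + 1))))
    (hcard : ∀ l ∈ L, l.card = n + 1)
    (hpair : ∀ p q : Fin (n ^ 2 + n + 1), p ≠ q →
        ∃! l : Finset (Fin (n ^ 2 + n + 1)), l ∈ L ∧ p ∈ l ∧ q ∈ l) :
    ∃ M : Fin (n - 1) → Fin n → Fin n → Fin n,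
      (∀ k : Fin (n - 1),
        (∀ i, Function.Bijective (M k i)) ∧
        (∀ j, Function.Bijective (fun i => M k i j))) ∧
      (∀ k l : Fin (n - 1), k ≠ l →
        Function.Injective (fun p : Fin n × Fin n => (M k p.1 p.2, M l p.1 p.2))) := by
  have hn2 : 4 ≤ n ^ 2 := by nlinarith
  have hN : 7 ≤ n ^ 2 + n + 1 := by omega
  -- get a line
  obtain ⟨ℓ, ⟨hℓL, -, -⟩, -⟩ := hpair ⟨0, by omega⟩ ⟨1, by omega⟩ (by simp [Fin.ext_iff])
  have hℓcard : ℓ.card = n + 1 := hcard ℓ hℓL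
  -- enumerate points of ℓ
  set Pe : {x // x ∈ ℓ} ≃ Fin (n+1) := Finset.equivFinOfCardEq hℓcard with hPe
  set P : Fin (n+1) → Fin (n ^ 2 + n + 1) := fun c => (Pe.symm c : _) with hP
  have hPmem : ∀ c, P c ∈ ℓ := fun c => (Pe.symm c).2
  have hPinj : Function.Injective P :=
    fun a b hab => Pe.symm.injective (Subtype.ext hab)
  -- off points
  set O : Finset (Fin (n ^ 2 + n + 1)) := ℓᶜ with hO
  have hOcard : O.card = n ^ 2 := by
    rw [hO, Finset.card_compl, hℓcard]
    simp only [Fintype.card_fin]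
    omega
  have hOnot : ∀ z ∈ O, z ∉ ℓ := fun z hz => by simpa [hO] using hz
  -- line through P c and off point z
  have key : ∀ (c : Fin (n+1)) (z : Fin (n ^ 2 + n + 1)), z ∈ O →
      ∃ m, (m ∈ L ∧ P c ∈ m ∧ z ∈ m) ∧
        ∀ m', (m' ∈ L ∧ P c ∈ m' ∧ z ∈ m') → m' = m := by
    intro c z hz
    exact hpair (P c) z (fun h => hOnot z hz (h ▸ hPmem c))
  choose lam hlam hlamu using key
  have hlamL : ∀ c z hz, lam c z hz ∈ L := fun c z hz => (hlam c z hz).1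
  have hlamP : ∀ c z hz, P c ∈ lam c z hz := fun c z hz => (hlam c z hz).2.1
  have hlamz : ∀ c z hz, z ∈ lam c z hz := fun c z hz => (hlam c z hz).2.2
  have hlamne : ∀ c z hz, lam c z hz ≠ ℓ :=
    fun c z hz h => hOnot z hz (h ▸ hlamz c z hz)
  -- two distinct base points force line = ℓ
  have hline_two : ∀ (m : Finset (Fin (n ^ 2 + n + 1))), m ∈ L →
      ∀ c c', c ≠ c' → P c ∈ m → P c' ∈ m → m = ℓ := by
    intro m hm c c' hcc' hc hc'
    have hPne : P c ≠ P c' := fun h => hcc' (hPinj h)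
    obtain ⟨u, -, hu⟩ := hpair (P c) (P c') hPne
    rw [hu m ⟨hm, hc, hc'⟩, hu ℓ ⟨hℓL, hPmem c, hPmem c'⟩]
  -- key separation lemma
  have hkey : ∀ (c c' : Fin (n+1)), c ≠ c' →
      ∀ z z' (hz : z ∈ O) (hz' : z' ∈ O),
      lam c z hz = lam c z' hz' → lam c' z hz = lam c' z' hz' → z = z' := by
    intro c c' hcc' z z' hz hz' h1 h2
    by_contra hne
    obtain ⟨u, -, hu⟩ := hpair z z' hne
    have e1 : lam c z hz = u := hu _ ⟨hlamL c z hz, hlamz c z hz, h1 ▸ hlamz c z' hz'⟩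
    have e2 : lam c' z hz = u := hu _ ⟨hlamL c' z hz, hlamz c' z hz, h2 ▸ hlamz c' z' hz'⟩
    have : lam c z hz = ℓ :=
      hline_two _ (hlamL c z hz) c c' hcc' (hlamP c z hz)
        (by rw [e1, ← e2]; exact hlamP c' z hz)
    exact hlamne c z hz this
  -- lines through P c other than ℓ have exactly n off points
  have hfib : ∀ (c : Fin (n+1)) (m : Finset (Fin (n ^ 2 + n + 1))), m ∈ L → P c ∈ m →
      m ≠ ℓ → (O.filter (fun z => z ∈ m)).card = n := by
    intro c m hm hPc hne
    have hint : m ∩ ℓ = {P c} := by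
      ext q
      simp only [Finset.mem_inter, Finset.mem_singleton]
      constructor
      · rintro ⟨hq1, hq2⟩
        by_contra hqP
        have hPq : P c ≠ q := fun h => hqP h.symm
        obtain ⟨u, -, hu⟩ := hpair (P c) q hPq
        exact hne ((hu m ⟨hm, hPc, hq1⟩).trans (hu ℓ ⟨hℓL, hPmem c, hq2⟩).symm)
      · rintro rfl
        exact ⟨hPc, hPmem c⟩
    have hsd : O.filter (fun z => z ∈ m) = m \ ℓ := by
      ext z
      simp only [Finset.mem_filter, Finset.mem_sdiff, hO, Finset.mem_compl]
      tauto
    have := Finset.card_sdiff_add_card_inter m ℓ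
    rw [hint, Finset.card_singleton, hcard m hm] at this
    rw [hsd]
    omega
  -- pencils
  set pencil : Fin (n+1) → Finset (Finset (Fin (n ^ 2 + n + 1))) :=
    fun c => L.filter (fun m => P c ∈ m ∧ m ≠ ℓ) with hpencil
  have hlam_pencil : ∀ c z hz, lam c z hz ∈ pencil c := by
    intro c z hz
    simp only [hpencil, Finset.mem_filter]
    exact ⟨hlamL c z hz, hlamP c z hz, hlamne c z hz⟩
  have hpencil_card : ∀ c, (pencil c).card = n := by
    intro c
    classical
    have hsum := Finset.card_eq_sum_card_fiberwise
      (f := fun z => if hz : z ∈ O then lam c z hz else ∅) (s := O) (t := pencil c)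
      (by intro z hz; simp only [Finset.mem_coe] at hz ⊢; simp only [dif_pos hz]; exact hlam_pencil c z hz)
    have hfib' : ∀ m ∈ pencil c,
        (O.filter (fun z => (if hz : z ∈ O then lam c z hz else ∅) = m)).card = n := by
      intro m hm
      simp only [hpencil, Finset.mem_filter] at hm
      have : O.filter (fun z => (if hz : z ∈ O then lam c z hz else ∅) = m)
          = O.filter (fun z => z ∈ m) := by
        ext z
        simp only [Finset.mem_filter, and_congr_right_iff]
        intro hz
        rw [dif_pos hz]
        constructor
        · rintro rfl; exact hlamz c z hz
        · intro hzm; exact (hlamu c z hz m ⟨hm.1, hm.2.1, hzm⟩).symm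
      rw [this]
      exact hfib c m hm.1 hm.2.1 hm.2.2
    rw [Finset.sum_congr rfl hfib', Finset.sum_const, smul_eq_mul, hOcard] at hsum
    have hn0 : 0 < n := by omega
    have : n * n = (pencil c).card * n := by rw [← hsum]; ring
    exact (Nat.eq_of_mul_eq_mul_right hn0 this.symm)
  -- index pencils
  set E : ∀ c : Fin (n+1), {m // m ∈ pencil c} ≃ Fin n :=
    fun c => Finset.equivFinOfCardEq (hpencil_card c) with hE
  set σ : ∀ (c : Fin (n+1)) (z : Fin (n ^ 2 + n + 1)), z ∈ O → Fin n :=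
    fun c z hz => E c ⟨lam c z hz, hlam_pencil c z hz⟩ with hσ
  have hσeq : ∀ c z z' (hz : z ∈ O) (hz' : z' ∈ O),
      σ c z hz = σ c z' hz' → lam c z hz = lam c z' hz' := by
    intro c z z' hz hz' h
    have := (E c).injective h
    exact Subtype.ext_iff.mp this
  have hsep : ∀ (c c' : Fin (n+1)), c ≠ c' →
      ∀ (z z' : {z // z ∈ O}), σ c z.1 z.2 = σ c z'.1 z'.2 →
      σ c' z.1 z.2 = σ c' z'.1 z'.2 → z = z' := by
    intro c c' hcc' z z' h1 h2
    exact Subtype.ext (hkey c c' hcc' z.1 z'.1 z.2 z'.2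
      (hσeq c _ _ _ _ h1) (hσeq c' _ _ _ _ h2))
  -- coordinates
  set c0 : Fin (n+1) := ⟨0, by omega⟩ with hc0
  set c1 : Fin (n+1) := ⟨1, by omega⟩ with hc1
  have hc01 : c0 ≠ c1 := by simp [hc0, hc1, Fin.ext_iff]
  set θ : {z // z ∈ O} → Fin n × Fin n := fun z => (σ c0 z.1 z.2, σ c1 z.1 z.2) with hθ
  have hθinj : Function.Injective θ := by
    intro z z' h
    simp only [hθ, Prod.ext_iff] at h
    exact hsep c0 c1 hc01 z z' h.1 h.2
  have hθbij : Function.Bijective θ := by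
    rw [Fintype.bijective_iff_injective_and_card]
    refine ⟨hθinj, ?_⟩
    rw [Fintype.card_coe, hOcard]
    simp [sq]
  set Θ := Equiv.ofBijective θ hθbij with hΘ
  set pt : Fin n → Fin n → {z // z ∈ O} := fun i j => Θ.symm (i, j) with hpt
  have hpt0 : ∀ i j, σ c0 (pt i j).1 (pt i j).2 = i := fun i j =>
    congrArg Prod.fst (Θ.apply_symm_apply (i, j))
  have hpt1 : ∀ i j, σ c1 (pt i j).1 (pt i j).2 = j := fun i j =>
    congrArg Prod.snd (Θ.apply_symm_apply (i, j))
  have hptinj : ∀ i j i' j', pt i j = pt i' j' → i = i' ∧ j = j' := by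
    intro i j i' j' h
    have := Θ.symm.injective h
    simpa [Prod.ext_iff] using this
  -- classes for the squares
  set ck : Fin (n-1) → Fin (n+1) := fun k => ⟨k.val + 2, by omega⟩ with hck
  have hck0 : ∀ k, ck k ≠ c0 := by intro k; simp [hck, hc0, Fin.ext_iff]
  have hck1 : ∀ k, ck k ≠ c1 := by intro k; simp [hck, hc1, Fin.ext_iff]
  have hckinj : ∀ k l, k ≠ l → ck k ≠ ck l := by
    intro k l hkl h
    apply hkl
    have : k.val + 2 = l.val + 2 := by simpa [hck, Fin.ext_iff] using h
    exact Fin.ext (by omega)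
  refine ⟨fun k i j => σ (ck k) (pt i j).1 (pt i j).2, fun k => ⟨?_, ?_⟩, ?_⟩
  · -- rows
    intro i
    rw [← Finite.injective_iff_bijective]
    intro j j' h
    have hz : pt i j = pt i j' := by
      apply hsep (ck k) c0 (hck0 k) _ _ h
      rw [hpt0 i j, hpt0 i j']
    exact (hptinj _ _ _ _ hz).2
  · -- columns
    intro j
    rw [← Finite.injective_iff_bijective]
    intro i i' h
    have hz : pt i j = pt i' j := by
      apply hsep (ck k) c1 (hck1 k) _ _ h
      rw [hpt1 i j, hpt1 i' j]
    exact (hptinj _ _ _ _ hz).1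
  · -- orthogonality
    intro k l hkl p q h
    simp only [Prod.ext_iff] at h
    have hz : pt p.1 p.2 = pt q.1 q.2 :=
      hsep (ck k) (ck l) (hckinj k l hkl) _ _ h.1 h.2
    obtain ⟨h1, h2⟩ := hptinj _ _ _ _ hz
    exact Prod.ext h1 h2

end MOLSPlane

theorem mols_iff_projective_plane {n : ℕ} (hn : 2 ≤ n) :
    (∃ M : Fin (n - 1) → Fin n → Fin n → Fin n,
      (∀ k : Fin (n - 1),
        (∀ i, Function.Bijective (M k i)) ∧
        (∀ j, Function.Bijective (fun i => M k i j))) ∧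
      (∀ k l : Fin (n - 1), k ≠ l →
        Function.Injective (fun p : Fin n × Fin n => (M k p.1 p.2, M l p.1 p.2)))) ↔
    (∃ L : Finset (Finset (Fin (n ^ 2 + n + 1))),
      (∀ l ∈ L, l.card = n + 1) ∧
      (∀ p q : Fin (n ^ 2 + n + 1), p ≠ q →
        ∃! l : Finset (Fin (n ^ 2 + n + 1)), l ∈ L ∧ p ∈ l ∧ q ∈ l)) := by
  constructor
  · rintro ⟨M, hLatin, hOrth⟩
    obtain ⟨f, hf⟩ := build_f hn M hLatin hOrth
    exact dir1 hn f hf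
  · rintro ⟨L, hcard, hpair⟩
    exact dir2 hn L hcard hpair
end

section
/- There is no sharply 2-transitive group of permutations of a 6-element set; equivalently, the symmetric group S₆ has no subgroup of order 30 acting 2-transitively on the 6 points. -/
set_option maxRecDepth 10000 in
private lemma invol_aux6 : ∀ σ : Equiv.Perm (Fin 6), (∀ z, σ (σ z) = z) →
    ∀ x, σ x = x → ∃ y, y ≠ x ∧ σ y = y := by decide

private lemma pairs_card6 :
    (Finset.univ.filter fun p : Fin 6 × Fin 6 => p.1 ≠ p.2).card = 30 := by decide

private def pt6 : Fin 6 → Fin 6 := fun x => if x = 0 then 1 else 0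

private lemma pt6_ne : ∀ x, pt6 x ≠ x := by decide

private lemma target4 : ∀ x : Fin 6,
    (Finset.univ.filter fun y : Fin 6 => y ≠ x ∧ y ≠ pt6 x).card = 4 := by decide

private lemma exists_a6 : ∀ m : Fin 6, ∃ a : Fin 6, a ≠ 0 ∧ a ≠ 1 ∧ a ≠ 2 ∧ a ≠ m := by decide

set_option maxHeartbeats 1000000 in
set_option maxRecDepth 4000 in
theorem no_sharply_two_transitive_group_degree_six :
    ¬ ∃ G : Subgroup (Equiv.Perm (Fin 6)),
      ∀ a b c d : Fin 6, a ≠ b → c ≠ d →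
        ∃! σ : Equiv.Perm (Fin 6), σ ∈ G ∧ σ a = c ∧ σ b = d := by
  classical
  rintro ⟨G, H⟩
  -- two elements of G agreeing at two points are equal
  have uniq : ∀ (a b : Fin 6) (σ τ : Equiv.Perm (Fin 6)), a ≠ b → σ ∈ G → τ ∈ G →
      σ a = τ a → σ b = τ b → σ = τ := by
    intro a b σ τ hab hσ hτ h1 h2
    have hcd : τ a ≠ τ b := fun h => hab (τ.injective h)
    obtain ⟨ρ, -, hu⟩ := H a b (τ a) (τ b) hab hcd
    exact (hu σ ⟨hσ, h1, h2⟩).trans (hu τ ⟨hτ, rfl, rfl⟩).symm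
  -- an element of G fixing two points is the identity
  have fix1 : ∀ σ, σ ∈ G → ∀ a b : Fin 6, a ≠ b → σ a = a → σ b = b → σ = 1 := by
    intro σ hσ a b hab ha hb
    exact uniq a b σ 1 hab hσ (one_mem G) (by simp [ha]) (by simp [hb])
  have appsq : ∀ s : Equiv.Perm (Fin 6), s * s = 1 → ∀ z, s (s z) = z := by
    intro s h z
    have := congrArg (fun f : Equiv.Perm (Fin 6) => f z) h
    simpa using this
  -- swap elements
  have swap_ex : ∀ x y : Fin 6, x ≠ y → ∃ s : Equiv.Perm (Fin 6),
      s ∈ G ∧ s x = y ∧ s y = x ∧ s * s = 1 ∧ ∀ z, s z ≠ z := by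
    intro x y hxy
    obtain ⟨s, ⟨hsG, hsx, hsy⟩, -⟩ := H x y y x hxy hxy.symm
    have hsq : s * s = 1 := by
      apply fix1 (s * s) (mul_mem hsG hsG) x y hxy
      · rw [Equiv.Perm.mul_apply, hsx, hsy]
      · rw [Equiv.Perm.mul_apply, hsy, hsx]
    refine ⟨s, hsG, hsx, hsy, hsq, ?_⟩
    intro z hz
    obtain ⟨w, hwz, hw⟩ := invol_aux6 s (appsq s hsq) z hz
    have h1 : s = 1 := fix1 s hsG w z hwz hw hz
    rw [h1] at hsx
    simp at hsx
    exact hxy hsx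
  -- counting
  set GS : Finset (Equiv.Perm (Fin 6)) := Finset.univ.filter (· ∈ G) with hGSdef
  have memGS : ∀ σ, σ ∈ GS ↔ σ ∈ G := by intro σ; simp [hGSdef]
  have card30 : GS.card = 30 := by
    have h : GS.card = (Finset.univ.filter fun p : Fin 6 × Fin 6 => p.1 ≠ p.2).card := by
      apply Finset.card_bij (fun σ _ => (σ 0, σ 1))
      · intro σ hσ
        simp only [Finset.mem_filter, Finset.mem_univ, true_and]
        exact fun h => (by decide : (0 : Fin 6) ≠ 1) (σ.injective h)
      · intro σ hσ τ hτ h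
        exact uniq 0 1 σ τ (by decide) ((memGS σ).1 hσ) ((memGS τ).1 hτ)
          (congrArg Prod.fst h) (congrArg Prod.snd h)
      · rintro ⟨c, d⟩ hp
        simp only [Finset.mem_filter, Finset.mem_univ, true_and] at hp
        obtain ⟨σ, ⟨hσG, h0, h1⟩, -⟩ := H 0 1 c d (by decide) hp
        exact ⟨σ, (memGS σ).2 hσG, by rw [h0, h1]⟩
    rw [h, pairs_card6]
  have stab4 : ∀ x : Fin 6, (GS.filter fun σ => σ x = x ∧ σ ≠ 1).card = 4 := by
    intro x
    have h : (GS.filter fun σ => σ x = x ∧ σ ≠ 1).card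
        = (Finset.univ.filter fun y : Fin 6 => y ≠ x ∧ y ≠ pt6 x).card := by
      apply Finset.card_bij (fun σ _ => σ (pt6 x))
      · intro σ hσ
        obtain ⟨hσGS, hfx, hne⟩ := Finset.mem_filter.1 hσ
        simp only [Finset.mem_filter, Finset.mem_univ, true_and]
        constructor
        · intro h
          exact pt6_ne x (σ.injective (h.trans hfx.symm))
        · intro h
          exact hne (fix1 σ ((memGS σ).1 hσGS) x (pt6 x) (Ne.symm (pt6_ne x)) hfx h)
      · intro σ hσ τ hτ h
        obtain ⟨hσGS, hσfx, -⟩ := Finset.mem_filter.1 hσ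
        obtain ⟨hτGS, hτfx, -⟩ := Finset.mem_filter.1 hτ
        exact uniq x (pt6 x) σ τ (Ne.symm (pt6_ne x)) ((memGS σ).1 hσGS) ((memGS τ).1 hτGS)
          (hσfx.trans hτfx.symm) h
      · intro y hy
        simp only [Finset.mem_filter, Finset.mem_univ, true_and] at hy
        obtain ⟨σ, ⟨hσG, h0, h1⟩, -⟩ := H x (pt6 x) x y (Ne.symm (pt6_ne x))
          (fun h => hy.1 h.symm)
        refine ⟨σ, Finset.mem_filter.2 ⟨(memGS σ).2 hσG, h0, ?_⟩, h1⟩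
        intro h
        rw [h] at h1
        simp at h1
        exact hy.2 h1.symm
    rw [h, target4]
  have A24 : (GS.filter fun σ => σ ≠ 1 ∧ ∃ x, σ x = x).card = 24 := by
    have hA : (GS.filter fun σ => σ ≠ 1 ∧ ∃ x, σ x = x)
        = Finset.univ.biUnion (fun x : Fin 6 => GS.filter fun σ => σ x = x ∧ σ ≠ 1) := by
      ext σ
      simp only [Finset.mem_filter, Finset.mem_biUnion, Finset.mem_univ, true_and]
      constructor
      · rintro ⟨h1, h2, x, hx⟩
        exact ⟨x, h1, hx, h2⟩
      · rintro ⟨x, h1, hx, h2⟩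
        exact ⟨h1, h2, x, hx⟩
    rw [hA, Finset.card_biUnion]
    · rw [Finset.sum_congr rfl (fun x _ => stab4 x)]
      simp
    · intro x _ y _ hxy
      rw [Function.onFun, Finset.disjoint_left]
      intro σ h1 h2
      obtain ⟨hσGS, hfx, hne⟩ := Finset.mem_filter.1 h1
      obtain ⟨-, hfy, -⟩ := Finset.mem_filter.1 h2
      exact hne (fix1 σ ((memGS σ).1 hσGS) x y hxy hfx hfy)
  have F5 : (GS.filter fun σ => ∀ x, σ x ≠ x).card = 5 := by
    have hsplit := Finset.card_filter_add_card_filter_not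
      (s := GS) (p := fun σ : Equiv.Perm (Fin 6) => ∃ x, σ x = x)
    have hnc : (GS.filter fun σ : Equiv.Perm (Fin 6) => ¬ ∃ x, σ x = x)
        = GS.filter fun σ => ∀ x, σ x ≠ x := by
      apply Finset.filter_congr
      intro σ _
      push_neg
      rfl
    have hB : GS.filter (fun σ : Equiv.Perm (Fin 6) => ∃ x, σ x = x)
        = insert (1 : Equiv.Perm (Fin 6)) (GS.filter fun σ => σ ≠ 1 ∧ ∃ x, σ x = x) := by
      ext σ
      simp only [Finset.mem_insert, Finset.mem_filter]
      constructor
      · rintro ⟨hσ, hex⟩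
        by_cases h1 : σ = 1
        · exact Or.inl h1
        · exact Or.inr ⟨hσ, h1, hex⟩
      · rintro (rfl | ⟨hσ, -, hex⟩)
        · exact ⟨(memGS 1).2 (one_mem G), 0, by simp⟩
        · exact ⟨hσ, hex⟩
    rw [hnc, hB, Finset.card_insert_of_notMem (by simp), A24, card30] at hsplit
    omega
  -- the five swap elements
  obtain ⟨s1, s1G, s1x, s1y, s1sq, s1f⟩ := swap_ex 0 1 (by decide)
  obtain ⟨s2, s2G, s2x, s2y, s2sq, s2f⟩ := swap_ex 0 2 (by decide)
  obtain ⟨s3, s3G, s3x, s3y, s3sq, s3f⟩ := swap_ex 0 3 (by decide)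
  obtain ⟨s4, s4G, s4x, s4y, s4sq, s4f⟩ := swap_ex 0 4 (by decide)
  obtain ⟨s5, s5G, s5x, s5y, s5sq, s5f⟩ := swap_ex 0 5 (by decide)
  have hne0 : ∀ (a b : Equiv.Perm (Fin 6)) (i j : Fin 6), a 0 = i → b 0 = j → i ≠ j →
      a ≠ b := fun a b i j ha hb hij h => hij (by rw [← ha, ← hb, h])
  have d12 := hne0 s1 s2 1 2 s1x s2x (by decide)
  have d13 := hne0 s1 s3 1 3 s1x s3x (by decide)
  have d14 := hne0 s1 s4 1 4 s1x s4x (by decide)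
  have d15 := hne0 s1 s5 1 5 s1x s5x (by decide)
  have d23 := hne0 s2 s3 2 3 s2x s3x (by decide)
  have d24 := hne0 s2 s4 2 4 s2x s4x (by decide)
  have d25 := hne0 s2 s5 2 5 s2x s5x (by decide)
  have d34 := hne0 s3 s4 3 4 s3x s4x (by decide)
  have d35 := hne0 s3 s5 3 5 s3x s5x (by decide)
  have d45 := hne0 s4 s5 4 5 s4x s5x (by decide)
  have hsub : ({s1, s2, s3, s4, s5} : Finset (Equiv.Perm (Fin 6)))
      ⊆ GS.filter fun σ => ∀ x, σ x ≠ x := by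
    intro σ hσ
    simp only [Finset.mem_insert, Finset.mem_singleton] at hσ
    rcases hσ with rfl | rfl | rfl | rfl | rfl
    exacts [Finset.mem_filter.2 ⟨(memGS _).2 s1G, s1f⟩,
      Finset.mem_filter.2 ⟨(memGS _).2 s2G, s2f⟩,
      Finset.mem_filter.2 ⟨(memGS _).2 s3G, s3f⟩,
      Finset.mem_filter.2 ⟨(memGS _).2 s4G, s4f⟩,
      Finset.mem_filter.2 ⟨(memGS _).2 s5G, s5f⟩]
  have hcard5 : ({s1, s2, s3, s4, s5} : Finset (Equiv.Perm (Fin 6))).card = 5 := by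
    rw [Finset.card_insert_of_notMem (by simp [d12, d13, d14, d15]),
      Finset.card_insert_of_notMem (by simp [d23, d24, d25]),
      Finset.card_insert_of_notMem (by simp [d34, d35]),
      Finset.card_insert_of_notMem (by simp [d45]),
      Finset.card_singleton]
  have hF : GS.filter (fun σ : Equiv.Perm (Fin 6) => ∀ x, σ x ≠ x) = {s1, s2, s3, s4, s5} :=
    (Finset.eq_of_subset_of_card_le hsub (by rw [F5, hcard5])).symm
  -- every fixed-point-free element of G is an involution
  have fpf_invol : ∀ u : Equiv.Perm (Fin 6), u ∈ G → (∀ x, u x ≠ x) → u * u = 1 := by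
    intro u hu hf
    have hmem : u ∈ ({s1, s2, s3, s4, s5} : Finset (Equiv.Perm (Fin 6))) := by
      rw [← hF]
      exact Finset.mem_filter.2 ⟨(memGS u).2 hu, hf⟩
    simp only [Finset.mem_insert, Finset.mem_singleton] at hmem
    rcases hmem with rfl | rfl | rfl | rfl | rfl
    exacts [s1sq, s2sq, s3sq, s4sq, s5sq]
  -- the product s1 * s2 is fixed-point-free
  have ufpf : ∀ x, (s1 * s2) x ≠ x := by
    intro x hx
    rw [Equiv.Perm.mul_apply] at hx
    have h2 : s2 x ≠ x := fun h => s1f x (by rw [h] at hx; exact hx)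
    have e1 : s1 x = s2 x := by
      have h := congrArg s1 hx
      rw [appsq s1 s1sq] at h
      exact h.symm
    have e2 : s1 (s2 x) = s2 (s2 x) := by rw [hx, appsq s2 s2sq]
    exact d12 (uniq x (s2 x) s1 s2 (Ne.symm h2) s1G s2G e1 e2)
  have usq : (s1 * s2) * (s1 * s2) = 1 := fpf_invol (s1 * s2) (mul_mem s1G s2G) ufpf
  -- value bookkeeping
  set m := s1 2 with hm
  have s1m : s1 m = 2 := by rw [hm]; exact appsq s1 s1sq 2
  have hm0 : m ≠ 0 := by
    intro h
    rw [h, s1x] at s1m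
    exact absurd s1m (by decide)
  have hm1 : m ≠ 1 := by
    intro h
    rw [h, s1y] at s1m
    exact absurd s1m (by decide)
  have hm2 : m ≠ 2 := fun h => s1f 2 (hm ▸ h)
  have hu0 : (s1 * s2) 0 = m := by rw [Equiv.Perm.mul_apply, s2x, ← hm]
  have hum : (s1 * s2) m = 0 := by
    have h := appsq (s1 * s2) usq 0
    rw [hu0] at h
    exact h
  have hs2m : s2 m = 1 := by
    rw [Equiv.Perm.mul_apply] at hum
    have h := congrArg s1 hum
    rw [appsq s1 s1sq, s1x] at h
    exact h
  have hs21 : s2 1 = m := by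
    have h := appsq s2 s2sq m
    rw [hs2m] at h
    exact h
  obtain ⟨a, ha0, ha1, ha2, ham⟩ := exists_a6 m
  -- distinctness of the seven points
  have hsa0 : s1 a ≠ 0 := by
    intro h
    have h' := appsq s1 s1sq a
    rw [h, s1x] at h'
    exact ha1 h'.symm
  have hsa1 : s1 a ≠ 1 := by
    intro h
    have h' := appsq s1 s1sq a
    rw [h, s1y] at h'
    exact ha0 h'.symm
  have hsa2 : s1 a ≠ 2 := by
    intro h
    have h' := appsq s1 s1sq a
    rw [h, ← hm] at h'
    exact ham h'.symm
  have hsam : s1 a ≠ m := by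
    intro h
    have h' := appsq s1 s1sq a
    rw [h, s1m] at h'
    exact ha2 h'.symm
  have hsaa : s1 a ≠ a := s1f a
  have hta0 : s2 a ≠ 0 := by
    intro h
    have h' := appsq s2 s2sq a
    rw [h, s2x] at h'
    exact ha2 h'.symm
  have hta1 : s2 a ≠ 1 := by
    intro h
    have h' := appsq s2 s2sq a
    rw [h, hs21] at h'
    exact ham h'.symm
  have hta2 : s2 a ≠ 2 := by
    intro h
    have h' := appsq s2 s2sq a
    rw [h, s2y] at h'
    exact ha0 h'.symm
  have htam : s2 a ≠ m := by
    intro h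
    have h' := appsq s2 s2sq a
    rw [h, hs2m] at h'
    exact ha1 h'.symm
  have htaa : s2 a ≠ a := s2f a
  have htasa : s2 a ≠ s1 a := by
    intro h
    apply ufpf (s2 a)
    rw [Equiv.Perm.mul_apply, appsq s2 s2sq, ← h]
  -- seven distinct elements of Fin 6 : contradiction
  have n01 : (0 : Fin 6) ≠ 1 := by decide
  have n02 : (0 : Fin 6) ≠ 2 := by decide
  have n12 : (1 : Fin 6) ≠ 2 := by decide
  have hcard7 : ({0, 1, 2, m, a, s1 a, s2 a} : Finset (Fin 6)).card = 7 := by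
    rw [Finset.card_insert_of_notMem (by
        simp only [Finset.mem_insert, Finset.mem_singleton]
        push_neg
        exact ⟨n01, n02, Ne.symm hm0, Ne.symm ha0, Ne.symm hsa0, Ne.symm hta0⟩),
      Finset.card_insert_of_notMem (by
        simp only [Finset.mem_insert, Finset.mem_singleton]
        push_neg
        exact ⟨n12, Ne.symm hm1, Ne.symm ha1, Ne.symm hsa1, Ne.symm hta1⟩),
      Finset.card_insert_of_notMem (by
        simp only [Finset.mem_insert, Finset.mem_singleton]
        push_neg
        exact ⟨Ne.symm hm2, Ne.symm ha2, Ne.symm hsa2, Ne.symm hta2⟩),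
      Finset.card_insert_of_notMem (by
        simp only [Finset.mem_insert, Finset.mem_singleton]
        push_neg
        exact ⟨Ne.symm ham, Ne.symm hsam, Ne.symm htam⟩),
      Finset.card_insert_of_notMem (by
        simp only [Finset.mem_insert, Finset.mem_singleton]
        push_neg
        exact ⟨Ne.symm hsaa, Ne.symm htaa⟩),
      Finset.card_insert_of_notMem (by
        simp only [Finset.mem_singleton]
        exact Ne.symm htasa),
      Finset.card_singleton]
  have hle := Finset.card_le_univ ({0, 1, 2, m, a, s1 a, s2 a} : Finset (Fin 6))
  rw [hcard7] at hle
  simp [Finset.card_univ] at hle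
end
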